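/- Suppose β_i = β ≥ 0 for all i and there exists T ≥ 0 such that for all t ≥ T the matrix A(t) is symmetric with nonnegative entries and zero diagonal, piecewise continuous in t and bounded, and λ̄ := sup_{t≥T} λ₁(βA(t) − D) < 0. Then every differentiable solution p of the time-varying n-intertwined SIS model that is componentwise nonnegative at time T satisfies ‖p(t)‖ ≤ e^{λ̄(t−T)} ‖p(T)‖ for all t ≥ T; i.e. the disease-free equilibrium is globally exponentially stable from time T onward. -/

import Mathlib

/-!
Two energy estimates, each closed by Grönwall's inequality. The squared negative part
`∑ᵢ min(pᵢ, 0)²` vanishes at time `T`, and on a compact time interval, where `p` and `A` are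
bounded, its derivative is at most a constant multiple of itself; so it stays zero and `p ≥ 0`.
For `p ≥ 0` the nonlinear term `-β ∑ᵢ pᵢ² (A p)ᵢ` is nonpositive, hence
`d/dt ‖p‖² ≤ 2 pᵀ (βA - D) p ≤ 2 λ̄ ‖p‖²`, the last step because `λ̄ • 1 - (βA - D)` is positive
semidefinite.
-/

open Matrix Finset Set

noncomputable def eucNorm {n : ℕ} (x : Fin n → ℝ) : ℝ := Real.sqrt (∑ i, x i ^ 2)

lemma le_mul_exp_of_hasDerivAt_le {f f' : ℝ → ℝ} {a b K : ℝ} (hab : a ≤ b)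
    (hf : ∀ t ∈ Icc a b, HasDerivAt f (f' t) t) (hle : ∀ t ∈ Ico a b, f' t ≤ K * f t) :
    f b ≤ f a * Real.exp (K * (b - a)) := by
  have := le_gronwallBound_of_liminf_deriv_right_le (f := f) (f' := f') (ε := 0)
    (fun t ht => (hf t ht).continuousAt.continuousWithinAt)
    (fun t ht _ hr => (hf t (Ico_subset_Icc_self ht)).hasDerivWithinAt.liminf_right_slope_le hr)
    le_rfl (by simpa using hle) b ⟨hab, le_rfl⟩
  rwa [gronwallBound_ε0] at this

lemma hasDerivAt_min_zero_sq (x : ℝ) :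
    HasDerivAt (fun y : ℝ => min y 0 ^ 2) (2 * min x 0) x := by
  refine hasDerivAt_of_hasDerivAt_of_ne' (x := 0) (g := fun y => 2 * min y 0) (fun y hy => ?_)
    (by fun_prop) (by fun_prop) x
  rcases hy.lt_or_gt with hy | hy
  · rw [min_eq_left hy.le]
    refine (by simpa using hasDerivAt_pow 2 y : HasDerivAt (fun y : ℝ => y ^ 2) (2 * y) y)
      |>.congr_of_eventuallyEq ?_
    filter_upwards [Iio_mem_nhds hy] with z (hz : z < 0)
    rw [min_eq_left hz.le]
  · rw [min_eq_right hy.le, mul_zero]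
    refine (hasDerivAt_const y (0 : ℝ)).congr_of_eventuallyEq ?_
    filter_upwards [Ioi_mem_nhds hy] with z (hz : 0 < z)
    simp [min_eq_right hz.le]

lemma hasDerivAt_sum_comp_apply {ι : Type*} [Fintype ι] {φ φ' : ℝ → ℝ} {p : ℝ → ι → ℝ}
    {p' : ι → ℝ} {t : ℝ} (hφ : ∀ y, HasDerivAt φ (φ' y) y)
    (hp : ∀ i, HasDerivAt (fun s => p s i) (p' i) t) :
    HasDerivAt (fun s => ∑ i, φ (p s i)) (∑ i, φ' (p t i) * p' i) t :=
  HasDerivAt.fun_sum fun i _ => (hφ _).comp t (hp i)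

namespace Matrix.IsHermitian

variable {ι : Type*} [Fintype ι] [DecidableEq ι] {M : Matrix ι ι ℝ} {lam : ℝ}

lemma posSemidef_smul_one_sub (hM : M.IsHermitian) (h : ∀ i, hM.eigenvalues i ≤ lam) :
    (lam • 1 - M).PosSemidef := by
  have hdiag : lam • 1 - M = Unitary.conjStarAlgAut ℝ _ hM.eigenvectorUnitary
      (diagonal fun i => lam - hM.eigenvalues i) := by
    conv_lhs => rw [hM.spectral_theorem,
      ← map_one (Unitary.conjStarAlgAut ℝ _ hM.eigenvectorUnitary), ← map_smul, ← map_sub]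
    congr 1
    ext i j
    by_cases hij : i = j <;> simp [hij]
  rw [hdiag, Unitary.conjStarAlgAut_apply, Unitary.isUnit_coe.posSemidef_star_right_conjugate_iff,
    posSemidef_diagonal_iff]
  exact fun i => sub_nonneg.2 (h i)

lemma dotProduct_mulVec_le (hM : M.IsHermitian) (h : ∀ i, hM.eigenvalues i ≤ lam) (x : ι → ℝ) :
    x ⬝ᵥ (M *ᵥ x) ≤ lam * (x ⬝ᵥ x) := by
  simpa [sub_mulVec, dotProduct_sub, smul_mulVec] using
    (hM.posSemidef_smul_one_sub h).dotProduct_mulVec_nonneg x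

end Matrix.IsHermitian

def sisVectorField {ι : Type*} [Fintype ι] (β : ℝ) (δ : ι → ℝ) (M : Matrix ι ι ℝ) (x : ι → ℝ) :
    ι → ℝ :=
  fun i => (1 - x i) * β * (M *ᵥ x) i - δ i * x i

section SIS

variable {ι : Type*} [Fintype ι] {β : ℝ} {δ : ι → ℝ}

lemma dotProduct_sisVectorField_le [DecidableEq ι] {M : Matrix ι ι ℝ} {x : ι → ℝ}
    (hβ : 0 ≤ β) (hM : ∀ i j, 0 ≤ M i j) (hx : 0 ≤ x) :
    x ⬝ᵥ sisVectorField β δ M x ≤ x ⬝ᵥ ((β • M - diagonal δ) *ᵥ x) := by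
  have hMx : 0 ≤ M *ᵥ x := fun i => sum_nonneg fun j _ => mul_nonneg (hM i j) (hx j)
  have hgap : x ⬝ᵥ ((β • M - diagonal δ) *ᵥ x) - x ⬝ᵥ sisVectorField β δ M x
      = β * ∑ i, x i ^ 2 * (M *ᵥ x) i := by
    simp only [sisVectorField, dotProduct, sub_mulVec, smul_mulVec, mulVec_diagonal, Pi.sub_apply,
      Pi.smul_apply, smul_eq_mul, ← sum_sub_distrib, mul_sum]
    exact sum_congr rfl fun i _ => by ring
  have : 0 ≤ β * ∑ i, x i ^ 2 * (M *ᵥ x) i :=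
    mul_nonneg hβ (sum_nonneg fun i _ => mul_nonneg (sq_nonneg _) (hMx i))
  linarith

lemma min_zero_mul_sisVectorField_le {M : Matrix ι ι ℝ} {x : ι → ℝ} {C K : ℝ} (hβ : 0 ≤ β)
    (hδ : 0 ≤ δ) (hM : ∀ i j, 0 ≤ M i j) (hMC : ∀ i j, M i j ≤ C) (hxK : ∀ i, -K ≤ x i)
    (i : ι) :
    min (x i) 0 * sisVectorField β δ M x i ≤
      β * (1 + K) * C * (min (x i) 0 * ∑ j, min (x j) 0) := by
  rcases le_or_gt 0 (x i) with hxi | hxi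
  · simp [min_eq_right hxi]
  set m : ι → ℝ := fun j => min (x j) 0
  have hm : ∀ j, m j ≤ 0 := fun j => min_le_right _ _
  have hC : 0 ≤ C := (hM i i).trans (hMC i i)
  have hmM : x i * (M *ᵥ x) i ≤ C * (x i * ∑ j, m j) := calc
    x i * (M *ᵥ x) i ≤ ∑ j, M i j * (x i * m j) := by
      rw [mulVec, dotProduct, mul_sum]
      exact sum_le_sum fun j _ => by
        nlinarith [mul_nonneg (mul_nonneg (hM i j) (neg_nonneg.2 hxi.le))
          (sub_nonneg.2 (min_le_left (x j) 0))]
    _ ≤ ∑ j, C * (x i * m j) := sum_le_sum fun j _ =>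
      mul_le_mul_of_nonneg_right (hMC i j) (mul_nonneg_of_nonpos_of_nonpos hxi.le (hm j))
    _ = C * (x i * ∑ j, m j) := by simp only [mul_sum]
  have hsum : 0 ≤ x i * ∑ j, m j :=
    mul_nonneg_of_nonpos_of_nonpos hxi.le (sum_nonpos fun j _ => hm j)
  have h1x : 1 - x i ≤ 1 + K := by linarith [hxK i]
  rw [show min (x i) 0 = x i from min_eq_left hxi.le, sisVectorField]
  calc x i * ((1 - x i) * β * (M *ᵥ x) i - δ i * x i)
      = (1 - x i) * β * (x i * (M *ᵥ x) i) - δ i * x i ^ 2 := by ring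
    _ ≤ (1 - x i) * β * (C * (x i * ∑ j, m j)) - 0 := by
      gcongr
      · exact mul_nonneg (by linarith) hβ
      · exact mul_nonneg (hδ i) (sq_nonneg _)
    _ ≤ β * (1 + K) * C * (x i * ∑ j, m j) := by
      nlinarith [mul_nonneg (mul_nonneg hβ hC) hsum]

lemma sum_min_zero_mul_sisVectorField_le {M : Matrix ι ι ℝ} {x : ι → ℝ} {C K : ℝ} (hβ : 0 ≤ β)
    (hδ : 0 ≤ δ) (hM : ∀ i j, 0 ≤ M i j) (hMC : ∀ i j, M i j ≤ C) (hC : 0 ≤ C) (hK : 0 ≤ K)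
    (hxK : ∀ i, -K ≤ x i) :
    ∑ i, min (x i) 0 * sisVectorField β δ M x i ≤
      β * (1 + K) * C * Fintype.card ι * ∑ i, min (x i) 0 ^ 2 := calc
  _ ≤ ∑ i, β * (1 + K) * C * (min (x i) 0 * ∑ j, min (x j) 0) :=
    sum_le_sum fun i _ => min_zero_mul_sisVectorField_le hβ hδ hM hMC hxK i
  _ = β * (1 + K) * C * (∑ i, min (x i) 0) ^ 2 := by rw [← mul_sum, ← sum_mul, sq]
  _ ≤ β * (1 + K) * C * (Fintype.card ι * ∑ i, min (x i) 0 ^ 2) := by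
    gcongr
    exact sq_sum_le_card_mul_sum_sq
  _ = _ := by ring

variable {T : ℝ} {A : ℝ → Matrix ι ι ℝ} {p : ℝ → ι → ℝ}

theorem sis_solution_nonneg (hβ : 0 ≤ β) (hδ : 0 ≤ δ) (hA : ∀ t, T ≤ t → ∀ i j, 0 ≤ A t i j)
    (hbdd : ∃ C, ∀ t, T ≤ t → ∀ i j, A t i j ≤ C)
    (hp : ∀ t, T ≤ t → ∀ i, HasDerivAt (fun s => p s i) (sisVectorField β δ (A t) (p t) i) t)
    (h0 : 0 ≤ p T) {t : ℝ} (ht : T ≤ t) : 0 ≤ p t := by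
  obtain ⟨C₀, hC₀⟩ := hbdd
  obtain ⟨K₀, hK₀⟩ := isCompact_Icc.exists_bound_of_continuousOn
    (continuousOn_pi.2 fun i s hs => (hp s hs.1 i).continuousAt.continuousWithinAt :
      ContinuousOn p (Icc T t))
  have hpK : ∀ s ∈ Icc T t, ∀ i, -max K₀ 0 ≤ p s i := fun s hs i => calc
    -max K₀ 0 ≤ -‖p s i‖ := neg_le_neg ((norm_le_pi_norm _ i).trans (hK₀ s hs) |>.trans
      (le_max_left _ _))
    _ ≤ p s i := neg_abs_le _
  set L := 2 * (β * (1 + max K₀ 0) * max C₀ 0 * Fintype.card ι)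
  have hf : ∀ s ∈ Icc T t, HasDerivAt (fun s => ∑ i, min (p s i) 0 ^ 2)
      (∑ i, 2 * min (p s i) 0 * sisVectorField β δ (A s) (p s) i) s := fun s hs =>
    hasDerivAt_sum_comp_apply hasDerivAt_min_zero_sq (hp s hs.1)
  have hle : ∀ s ∈ Ico T t, ∑ i, 2 * min (p s i) 0 * sisVectorField β δ (A s) (p s) i ≤
      L * ∑ i, min (p s i) 0 ^ 2 := fun s hs => by
    simp only [mul_assoc, ← mul_sum, L]
    gcongr 2 * ?_
    simpa only [← mul_assoc] using sum_min_zero_mul_sisVectorField_le hβ hδ (hA s hs.1)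
      (fun i j => (hC₀ s hs.1 i j).trans (le_max_left _ _)) (le_max_right _ _) (le_max_right _ _)
      (hpK s (Ico_subset_Icc_self hs))
  have hfT : ∑ i, min (p T i) 0 ^ 2 = 0 :=
    sum_eq_zero fun i _ => by simp [show 0 ≤ p T i from h0 i]
  have hft : ∑ i, min (p t i) 0 ^ 2 ≤ 0 := by
    simpa [hfT] using le_mul_exp_of_hasDerivAt_le ht hf hle
  intro i
  have hmin := (sum_eq_zero_iff_of_nonneg fun j _ => sq_nonneg (min (p t j) 0)).1
    (le_antisymm hft (sum_nonneg fun j _ => sq_nonneg _)) i (mem_univ i)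
  exact min_eq_right_iff.1 (pow_eq_zero_iff two_ne_zero |>.1 hmin)

theorem sis_sum_sq_le_mul_exp [DecidableEq ι] {lam : ℝ} (hβ : 0 ≤ β)
    (hA : ∀ t, T ≤ t → ∀ i j, 0 ≤ A t i j)
    (hquad : ∀ t, T ≤ t → ∀ x, x ⬝ᵥ ((β • A t - diagonal δ) *ᵥ x) ≤ lam * (x ⬝ᵥ x))
    (hp : ∀ t, T ≤ t → ∀ i, HasDerivAt (fun s => p s i) (sisVectorField β δ (A t) (p t) i) t)
    (hpos : ∀ t, T ≤ t → 0 ≤ p t) {t : ℝ} (ht : T ≤ t) :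
    ∑ i, p t i ^ 2 ≤ (∑ i, p T i ^ 2) * Real.exp (2 * lam * (t - T)) := by
  have hf : ∀ s ∈ Icc T t, HasDerivAt (fun s => ∑ i, p s i ^ 2)
      (∑ i, 2 * p s i * sisVectorField β δ (A s) (p s) i) s := fun s hs =>
    hasDerivAt_sum_comp_apply (fun y => by simpa using hasDerivAt_pow 2 y) (hp s hs.1)
  refine le_mul_exp_of_hasDerivAt_le ht hf fun s hs => ?_
  calc ∑ i, 2 * p s i * sisVectorField β δ (A s) (p s) i
      = 2 * (p s ⬝ᵥ sisVectorField β δ (A s) (p s)) := by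
        simp only [dotProduct, mul_sum, mul_assoc]
    _ ≤ 2 * (lam * (p s ⬝ᵥ p s)) := by
      gcongr
      exact (dotProduct_sisVectorField_le hβ (hA s hs.1) (hpos s hs.1)).trans (hquad s hs.1 _)
    _ = 2 * lam * ∑ i, p s i ^ 2 := by simp only [dotProduct, sq, mul_sum, mul_assoc]

end SIS

lemma eucNorm_le_exp_mul_of_sum_sq_le {n : ℕ} {x y : Fin n → ℝ} {c : ℝ}
    (h : ∑ i, x i ^ 2 ≤ (∑ i, y i ^ 2) * Real.exp (2 * c)) :
    eucNorm x ≤ Real.exp c * eucNorm y := by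
  rw [eucNorm, eucNorm, ← Real.sqrt_sq (Real.exp_pos c).le, ← Real.sqrt_mul (sq_nonneg _),
    mul_comm, sq, ← Real.exp_add, ← two_mul]
  exact Real.sqrt_le_sqrt h

theorem sis_homogeneous_symmetric_GES_from_time_T_general
    {n : ℕ} (β : ℝ) (hβ : 0 ≤ β) (δ : Fin n → ℝ) (hδ : ∀ i, 0 ≤ δ i)
    (T : ℝ)
    (A : ℝ → Matrix (Fin n) (Fin n) ℝ)
    (hsym : ∀ t, T ≤ t → (A t).IsSymm)
    (hnn : ∀ t, T ≤ t → ∀ i j, 0 ≤ A t i j)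
    (hbdd : ∃ C, ∀ t, T ≤ t → ∀ i j, |A t i j| ≤ C)
    (lam : ℝ)
    (hsup : ∀ t, T ≤ t →
      ∀ h : (β • A t - Matrix.diagonal δ).IsHermitian, (⨆ i, h.eigenvalues i) ≤ lam)
    (p : ℝ → Fin n → ℝ)
    (hode : ∀ t, T ≤ t → ∀ i, HasDerivAt (fun s => p s i)
      ((1 - p t i) * β * (∑ j, A t i j * p t j) - δ i * p t i) t)
    (h0 : ∀ i, 0 ≤ p T i) :
    ∀ t, T ≤ t → eucNorm (p t) ≤ Real.exp (lam * (t - T)) * eucNorm (p T) := by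
  have hpos : ∀ t, T ≤ t → 0 ≤ p t := fun t ht =>
    sis_solution_nonneg hβ hδ hnn
      (hbdd.imp fun C hC t ht i j => (le_abs_self _).trans (hC t ht i j)) hode h0 ht
  have hquad : ∀ t, T ≤ t → ∀ x, x ⬝ᵥ ((β • A t - diagonal δ) *ᵥ x) ≤ lam * (x ⬝ᵥ x) := by
    intro t ht
    have hM : (β • A t - diagonal δ).IsHermitian := by
      simp [IsHermitian, (hsym t ht).eq]
    exact hM.dotProduct_mulVec_le fun i =>
      (le_ciSup (Set.finite_range _).bddAbove i).trans (hsup t ht hM)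
  intro t ht
  refine eucNorm_le_exp_mul_of_sum_sq_le ?_
  rw [← mul_assoc]
  exact sis_sum_sq_le_mul_exp hβ hnn hquad hode hpos ht

/-- **GES of the DFE from time `T` onward (homogeneous, undirected case).**
Suppose `β_i = β ≥ 0` for all `i` and there is `T ≥ 0` such that for all `t ≥ T` the
matrix `A(t)` is symmetric with nonnegative entries and zero diagonal and bounded, and
`λ̄ := sup_{t≥T} λ₁(βA(t) − D) < 0` (encoded: `lam < 0` bounds the largest eigenvalue
for every `t ≥ T`).  Then every differentiable solution componentwise nonnegative at
time `T` satisfies `‖p(t)‖ ≤ e^{λ̄(t−T)} ‖p(T)‖` for all `t ≥ T`. -/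
theorem sis_homogeneous_symmetric_GES_from_time_T
    {n : ℕ} (β : ℝ) (hβ : 0 ≤ β) (δ : Fin n → ℝ) (hδ : ∀ i, 0 ≤ δ i)
    (T : ℝ) (hT : 0 ≤ T)
    (A : ℝ → Matrix (Fin n) (Fin n) ℝ)
    (hsym : ∀ t, T ≤ t → (A t).IsSymm)
    (hnn : ∀ t, T ≤ t → ∀ i j, 0 ≤ A t i j)
    (hdiag : ∀ t, T ≤ t → ∀ i, A t i i = 0)
    (hbdd : ∃ C, ∀ t, T ≤ t → ∀ i j, |A t i j| ≤ C)
    (lam : ℝ) (hlam : lam < 0)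
    (hsup : ∀ t, T ≤ t →
      ∀ h : (β • A t - Matrix.diagonal δ).IsHermitian, (⨆ i, h.eigenvalues i) ≤ lam)
    (p : ℝ → Fin n → ℝ)
    (hode : ∀ t, T ≤ t → ∀ i, HasDerivAt (fun s => p s i)
      ((1 - p t i) * β * (∑ j, A t i j * p t j) - δ i * p t i) t)
    (h0 : ∀ i, 0 ≤ p T i) :
    ∀ t, T ≤ t → eucNorm (p t) ≤ Real.exp (lam * (t - T)) * eucNorm (p T) :=
  sis_homogeneous_symmetric_GES_from_time_T_general β hβ δ hδ T A hsym hnn hbdd lam hsup p hode h0
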